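/- Farkas' lemma for signed tropical numbers: for every matrix A ∈ 𝕋±^{d×n}, exactly one of the two sets nnker(A) and sep(A) is nonempty. -/

import Mathlib

/-!  Signed tropical numbers 𝕋±, the symmetrized tropical semiring 𝕊,
     and signed tropical convexity (Loho–Végh). -/

inductive SSign : Type where
  | pos : SSign
  | neg : SSign
  | bal : SSign
deriving DecidableEq

/-- The symmetrized tropical semiring 𝕊: the tropical zero 𝟘 = -∞ together with
elements `elem s r` where `s` is a sign (⊕, ⊖ or •) and `r` a real number. -/
inductive STrop : Type where
  | zero : STrop
  | elem : SSign → ℝ → STrop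

namespace STrop

/-- membership in the signed tropical numbers 𝕋± (i.e. not balanced-nonzero). -/
def isSigned : STrop → Prop
  | elem SSign.bal _ => False
  | _ => True

/-- membership in 𝕋≥, the nonnegative tropical numbers. -/
def nneg : STrop → Prop
  | zero => True
  | elem SSign.pos _ => True
  | _ => False

/-- membership in 𝕋≤, the nonpositive tropical numbers. -/
def npos : STrop → Prop
  | zero => True
  | elem SSign.neg _ => True
  | _ => False

/-- strictly positive signed element (sign ⊕, not 𝟘). -/
def isPos : STrop → Prop
  | elem SSign.pos _ => True
  | _ => False

/-- balanced or 𝟘 (membership in 𝕋•). -/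
def balZero : STrop → Prop
  | zero => True
  | elem SSign.bal _ => True
  | _ => False

/-- the negation map ⊖. -/
def neg : STrop → STrop
  | zero => zero
  | elem SSign.pos r => elem SSign.neg r
  | elem SSign.neg r => elem SSign.pos r
  | elem SSign.bal r => elem SSign.bal r

/-- tropical addition ⊕ on 𝕊. -/
noncomputable def add : STrop → STrop → STrop
  | zero, y => y
  | x, zero => x
  | elem s r, elem t u =>
    if r < u then elem t u
    else if u < r then elem s r
    else if s = t then elem s r
    else elem SSign.bal r

def signMul : SSign → SSign → SSign
  | SSign.pos, t => t
  | SSign.neg, SSign.pos => SSign.neg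
  | SSign.neg, SSign.neg => SSign.pos
  | SSign.neg, SSign.bal => SSign.bal
  | SSign.bal, _ => SSign.bal

/-- tropical multiplication ⊙ on 𝕊. -/
def mul : STrop → STrop → STrop
  | zero, _ => zero
  | _, zero => zero
  | elem s r, elem t u => elem (signMul s t) (r + u)

/-- a ⊖ b := a ⊕ (⊖b). -/
noncomputable def sub (x y : STrop) : STrop := add x (neg y)

/-- the tropical one, the signed element ⊕0. -/
def one : STrop := elem SSign.pos 0

/-- the absolute value |·| : 𝕊 → 𝕋≥. -/
def absS : STrop → STrop
  | zero => zero
  | elem _ r => elem SSign.pos r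

/-- strict order: x > y iff x ⊖ y is a strictly positive signed element. -/
def sgt (x y : STrop) : Prop := isPos (sub x y)

/-- balance relation: x ⋈ y iff x ⊖ y is balanced or 𝟘. -/
def bal (x y : STrop) : Prop := balZero (sub x y)

/-- the relation ⊵ : x ⊵ y iff x > y or x ⋈ y. -/
def teq (x y : STrop) : Prop := sgt x y ∨ bal x y

/-- the total order ≤ on the signed tropical numbers 𝕋±
(arbitrarily `False` whenever a balanced element is involved). -/
def sle : STrop → STrop → Prop
  | zero, zero => True
  | zero, elem SSign.pos _ => True
  | elem SSign.neg _, zero => True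
  | elem SSign.neg _, elem SSign.pos _ => True
  | elem SSign.pos r, elem SSign.pos u => r ≤ u
  | elem SSign.neg r, elem SSign.neg u => u ≤ r
  | _, _ => False

/-- U(a): the set of signed numbers incomparable with a; the singleton {a}
for signed a, and the order interval [⊖|a|, |a|] for balanced a. -/
def U : STrop → Set STrop
  | elem SSign.bal r => {x | isSigned x ∧ sle (elem SSign.neg r) x ∧ sle x (elem SSign.pos r)}
  | a => {a}

/-- tropical sum of finitely many elements of 𝕊. -/
noncomputable def sumFin : ∀ {n : ℕ}, (Fin n → STrop) → STrop
  | 0, _ => zero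
  | _ + 1, f => add (f 0) (sumFin fun i => f i.succ)

/-- matrix–vector product A ⊙ x over 𝕊. -/
noncomputable def mv {d n : ℕ} (A : Fin d → Fin n → STrop) (x : Fin n → STrop) : Fin d → STrop :=
  fun i => sumFin fun j => mul (A i j) (x j)

/-- vectors in 𝕋±^d. -/
def isSignedVec {d : ℕ} (v : Fin d → STrop) : Prop := ∀ i, isSigned (v i)

/-- the signed tropical convex hull of the columns of a matrix A:
tconv(A) = {z ∈ 𝕋±^d : z ⋈ A⊙x for some x ∈ 𝕋≥^n with ⊕_j x_j = 0}. -/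
def tconv {d n : ℕ} (A : Fin d → Fin n → STrop) : Set (Fin d → STrop) :=
  {z | isSignedVec z ∧ ∃ x : Fin n → STrop,
    (∀ j, nneg (x j)) ∧ sumFin x = one ∧ ∀ i, bal (z i) (mv A x i)}

/-- the signed tropical convex hull of an arbitrary set: the union of the hulls
of all finite collections of points of M. -/
def tconvSet {d : ℕ} (M : Set (Fin d → STrop)) : Set (Fin d → STrop) :=
  ⋃ (n : ℕ) (A : Fin d → Fin n → STrop) (_ : ∀ j, (fun i => A i j) ∈ M), tconv A

/-- a set M ⊆ 𝕋±^d is tropically convex iff M = tconv(M). -/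
def TropConvex {d : ℕ} (M : Set (Fin d → STrop)) : Prop := M = tconvSet M

/-- evaluation a ⊙ (0, x₁, …, x_d)ᵀ of an affine functional. -/
noncomputable def affEval {d : ℕ} (a : Fin (d + 1) → STrop) (x : Fin d → STrop) : STrop :=
  sumFin fun j => mul (a j) ((Fin.cons one x : Fin (d + 1) → STrop) j)

/-- the open signed tropical halfspace H⁺(a) = {x ∈ 𝕋±^d : a⊙(0,x)ᵀ > 𝟘}. -/
def Hopen {d : ℕ} (a : Fin (d + 1) → STrop) : Set (Fin d → STrop) :=
  {x | isSignedVec x ∧ sgt (affEval a x) zero}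

/-- the closed signed tropical halfspace H̄⁺(a) = {x ∈ 𝕋±^d : a⊙(0,x)ᵀ ⊵ 𝟘}. -/
def Hclosed {d : ℕ} (a : Fin (d + 1) → STrop) : Set (Fin d → STrop) :=
  {x | isSignedVec x ∧ teq (affEval a x) zero}

/-- the non-negative kernel nnker(A). -/
def nnker {d n : ℕ} (A : Fin d → Fin n → STrop) : Set (Fin n → STrop) :=
  {x | (∀ j, nneg (x j)) ∧ x ≠ (fun _ => zero) ∧ ∀ i, balZero (mv A x i)}

/-- the open tropical cone sep(A) = {y ∈ 𝕋±^d : yᵀ⊙A > 𝟘 componentwise}. -/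
def sep {d : ℕ} {J : Type} (A : Fin d → J → STrop) : Set (Fin d → STrop) :=
  {y | isSignedVec y ∧ ∀ j, isPos (sumFin fun i => mul (y i) (A i j))}

end STrop

/-!
The proof is Fourier–Motzkin elimination, as for the classical Farkas lemma. Since 𝕊 is a
commutative semiring, nnker(A) and sep(A) cannot both be nonempty: for x ∈ nnker(A) and
y ∈ sep(A) the element (yᵀA)x is strictly positive while yᵀ(Ax) is balanced or 𝟘.

For the alternative, induct on the number of rows. Eliminating the last row b keeps the columns
j with b_j = 𝟘 and adds, for every pair (l, u) with b_l ∉ 𝕋≤ and b_u ∉ 𝕋≥, the column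
|b_u| A_l ⊕ |b_l| A_u, whose last entry is balanced. A kernel vector of the eliminated matrix
lifts to one of A. A separating vector of it extends by a last coordinate z ∈ 𝕋±: under the order
embedding ⊕a ↦ eᵃ, ⊖a ↦ -eᵃ of 𝕋± into ℝ, each column asks z to lie in an open half-line or
interval, and the pair columns say that these have a common point.
-/

open Matrix

namespace STrop

protected lemma add_zero (x : STrop) : add x zero = x := by cases x <;> rfl

protected lemma add_comm (x y : STrop) : add x y = add y x := by
  cases x with
  | zero => cases y <;> rfl
  | elem s r =>
    cases y with
    | zero => rfl
    | elem t u =>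
      simp only [add]
      rcases lt_trichotomy r u with h | rfl | h
      · simp [h, not_lt.mpr h.le]
      · by_cases hs : s = t
        · simp [hs]
        · simp [hs, Ne.symm hs]
      · simp [h, not_lt.mpr h.le]

protected lemma add_assoc (x y z : STrop) : add (add x y) z = add x (add y z) := by
  cases x with
  | zero => rfl
  | elem s r =>
  cases y with
  | zero => rfl
  | elem t u =>
  cases z with
  | zero => simp only [add]; split_ifs <;> rfl
  | elem v w =>
    simp only [add]
    split_ifs <;> dsimp only <;> split_ifs <;>
      first | rfl | (exfalso; linarith) | simp_all

lemma signMul_assoc (a b c : SSign) : signMul (signMul a b) c = signMul a (signMul b c) := by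
  cases a <;> cases b <;> cases c <;> rfl

lemma signMul_comm (a b : SSign) : signMul a b = signMul b a := by
  cases a <;> cases b <;> rfl

protected lemma mul_zero (x : STrop) : mul x zero = zero := by cases x <;> rfl

protected lemma mul_comm (x y : STrop) : mul x y = mul y x := by
  cases x <;> cases y <;> simp [mul, signMul_comm, add_comm]

protected lemma mul_assoc (x y z : STrop) : mul (mul x y) z = mul x (mul y z) := by
  cases x <;> cases y <;> cases z <;> simp [mul, signMul_assoc, add_assoc]

protected lemma one_mul (x : STrop) : mul one x = x := by
  cases x <;> simp [one, mul, signMul]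

protected lemma left_distrib (x y z : STrop) : mul x (add y z) = add (mul x y) (mul x z) := by
  cases x with
  | zero => rfl
  | elem s r =>
  cases y with
  | zero => rfl
  | elem t u =>
  cases z with
  | zero => simp only [add, mul]
  | elem v w =>
    simp only [add, mul]
    rcases lt_trichotomy u w with h | rfl | h
    · simp [h]
    · by_cases htv : t = v
      · simp [htv]
      · cases s <;> cases t <;> cases v <;> simp_all [signMul]
    · simp [h, not_lt.mpr h.le]

noncomputable instance : Add STrop := ⟨add⟩
instance : Zero STrop := ⟨zero⟩
instance : Mul STrop := ⟨mul⟩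
instance : One STrop := ⟨one⟩

noncomputable instance : CommSemiring STrop where
  add_assoc := STrop.add_assoc
  zero_add _ := rfl
  add_zero := STrop.add_zero
  add_comm := STrop.add_comm
  mul_assoc := STrop.mul_assoc
  one_mul := STrop.one_mul
  mul_one x := (STrop.mul_comm x one).trans (STrop.one_mul x)
  left_distrib := STrop.left_distrib
  right_distrib x y z := by
    change mul (add x y) z = add (mul x z) (mul y z)
    rw [STrop.mul_comm, STrop.left_distrib, STrop.mul_comm z, STrop.mul_comm z]
  zero_mul _ := rfl
  mul_zero := STrop.mul_zero
  mul_comm := STrop.mul_comm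
  nsmul := nsmulRec
  npow := npowRec

lemma add_def (x y : STrop) : x + y = add x y := rfl
lemma mul_def (x y : STrop) : x * y = mul x y := rfl
lemma zero_def : (0 : STrop) = zero := rfl

lemma balZero_add {x y : STrop} (hx : balZero x) (hy : balZero y) : balZero (x + y) := by
  cases x with
  | zero => exact hy
  | elem s r =>
    cases y with
    | zero => exact hx
    | elem t u =>
      simp only [add_def, add]
      split_ifs <;> trivial

lemma balZero_mul (x : STrop) {y : STrop} (hy : balZero y) : balZero (x * y) := by
  cases x with
  | zero => trivial
  | elem s r =>
    cases y with
    | zero => trivial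
    | elem t u => cases t <;> cases s <;> simp_all [balZero, mul_def, mul, signMul]

lemma nneg_add {x y : STrop} (hx : nneg x) (hy : nneg y) : nneg (x + y) := by
  cases x with
  | zero => exact hy
  | elem s r =>
    cases y with
    | zero => exact hx
    | elem t u =>
      simp only [add_def, add]
      split_ifs
      any_goals assumption
      cases s <;> cases t <;> simp_all [nneg]

lemma nneg_mul {x y : STrop} (hx : nneg x) (hy : nneg y) : nneg (x * y) := by
  cases x with
  | zero => trivial
  | elem s r =>
    cases y with
    | zero => trivial
    | elem t u => cases t <;> cases s <;> simp_all [nneg, mul_def, mul, signMul]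

lemma isPos_mul {x y : STrop} (hx : isPos x) (hy : isPos y) : isPos (x * y) := by
  cases x with
  | zero => exact hx.elim
  | elem s r =>
    cases y with
    | zero => exact hy.elim
    | elem t u => cases s <;> cases t <;> trivial

lemma isPos.nneg {x : STrop} (hx : isPos x) : nneg x := by
  cases x with
  | zero => exact hx.elim
  | elem s r => cases s <;> trivial

lemma isPos_of_nneg_of_ne_zero {x : STrop} (hx : nneg x) (h0 : x ≠ 0) : isPos x := by
  cases x with
  | zero => exact (h0 rfl).elim
  | elem s r => cases s <;> trivial

lemma not_isPos_of_balZero {x : STrop} (hx : balZero x) : ¬ isPos x := by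
  cases x with
  | zero => exact id
  | elem s r => cases s <;> simp_all [isPos, balZero]

lemma nneg_absS (x : STrop) : nneg (absS x) := by
  cases x <;> trivial

lemma isPos_absS {x : STrop} (hx : x ≠ 0) : isPos (absS x) := by
  cases x with
  | zero => exact hx rfl
  | elem s r => trivial

lemma balZero_mul_absS_add {p q : STrop} (hp : ¬ npos p) (hq : ¬ nneg q) :
    balZero (p * absS q + q * absS p) := by
  cases p with
  | zero => exact (hp trivial).elim
  | elem s r =>
    cases q with
    | zero => exact (hq trivial).elim
    | elem t u =>
      cases s <;> cases t <;> simp_all [npos, nneg, absS, mul_def, mul, signMul, add_def, add,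
        balZero, add_comm]

/-- The order embedding `⊕a ↦ eᵃ`, `⊖a ↦ -eᵃ`, `𝟘 ↦ 0` of 𝕋± into ℝ, extended to a balanced
`•a` by the image of the lower end `⊖a` of the interval `U(•a)`. -/
noncomputable def lowerReal : STrop → ℝ
  | zero => 0
  | elem SSign.pos r => Real.exp r
  | elem SSign.neg r => -Real.exp r
  | elem SSign.bal r => -Real.exp r

theorem isPos_add_iff (x y : STrop) : isPos (x + y) ↔ 0 < lowerReal x + lowerReal y := by
  cases x with
  | zero =>
    cases y with
    | zero => simp [isPos, lowerReal, add_def, add]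
    | elem t u => cases t <;> simp [isPos, lowerReal, add_def, add, Real.exp_nonneg, Real.exp_pos]
  | elem s r =>
    cases y with
    | zero => cases s <;> simp [isPos, lowerReal, add_def, add, Real.exp_nonneg, Real.exp_pos]
    | elem t u =>
      have := Real.exp_pos r
      have := Real.exp_pos u
      rcases lt_trichotomy r u with h | rfl | h
      · have := Real.exp_lt_exp.mpr h
        cases s <;> cases t <;> simp [isPos, lowerReal, add_def, add, h] <;> linarith
      · cases s <;> cases t <;>
          simp [isPos, lowerReal, add_def, add, Real.exp_nonneg, Real.exp_pos]
      · have := Real.exp_lt_exp.mpr h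
        cases s <;> cases t <;> simp [isPos, lowerReal, add_def, add, h, h.not_gt] <;> linarith

lemma lowerReal_nonneg {x : STrop} (hx : nneg x) : 0 ≤ lowerReal x := by
  cases x with
  | zero => exact le_rfl
  | elem s r => cases s <;> first | exact hx.elim | exact (Real.exp_pos r).le

lemma lowerReal_pos {x : STrop} (hx : isPos x) : 0 < lowerReal x := by
  cases x with
  | zero => exact hx.elim
  | elem s r => cases s <;> first | exact hx.elim | exact Real.exp_pos r

lemma isPos_add_of_nneg {x y : STrop} (hx : isPos x) (hy : nneg y) : isPos (x + y) :=
  (isPos_add_iff x y).2 (add_pos_of_pos_of_nonneg (lowerReal_pos hx) (lowerReal_nonneg hy))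

noncomputable def ofReal (t : ℝ) : STrop :=
  if t = 0 then zero
  else if 0 < t then elem SSign.pos (Real.log t)
  else elem SSign.neg (Real.log (-t))

lemma isSigned_ofReal (t : ℝ) : isSigned (ofReal t) := by
  unfold ofReal; split_ifs <;> trivial

lemma lowerReal_ofReal (t : ℝ) : lowerReal (ofReal t) = t := by
  unfold ofReal
  split_ifs with h0 hpos
  · exact h0.symm
  · exact Real.exp_log hpos
  · rw [lowerReal, Real.exp_log (neg_pos.2 ((not_lt.1 hpos).lt_of_ne h0)),
      neg_neg]

lemma lowerReal_mul_elem_pos (x : STrop) (β : ℝ) :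
    lowerReal (x * elem SSign.pos β) = lowerReal x * Real.exp β := by
  cases x with
  | zero => simp [lowerReal, mul_def, mul]
  | elem s r => cases s <;> simp [lowerReal, mul_def, mul, signMul, Real.exp_add]

lemma lowerReal_mul_absS (x y : STrop) :
    lowerReal (x * absS y) = lowerReal x * lowerReal (absS y) := by
  cases y with
  | zero => simp [absS, lowerReal, mul_def, STrop.mul_zero]
  | elem s β => exact lowerReal_mul_elem_pos x β

lemma lowerReal_mul_elem_neg {z : STrop} (hz : isSigned z) (β : ℝ) :
    lowerReal (z * elem SSign.neg β) = -(lowerReal z * Real.exp β) := by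
  cases z with
  | zero => simp [lowerReal, mul_def, mul]
  | elem s r =>
    cases s <;> simp_all [isSigned, lowerReal, mul_def, mul, signMul, Real.exp_add]

lemma lowerReal_mul_elem_bal {z : STrop} (hz : isSigned z) (β : ℝ) :
    lowerReal (z * elem SSign.bal β) = -(|lowerReal z| * Real.exp β) := by
  cases z with
  | zero => simp [lowerReal, mul_def, mul]
  | elem s r =>
    cases s <;> simp_all [isSigned, lowerReal, mul_def, mul, signMul, Real.exp_add]

lemma lowerReal_absS_pos {x : STrop} (hx : x ≠ 0) : 0 < lowerReal (absS x) :=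
  lowerReal_pos (isPos_absS hx)

lemma isPos_add_ofReal_mul {c b : STrop} {t : ℝ} (hb : b ≠ 0)
    (hlo : ¬ npos b → -(lowerReal c / lowerReal (absS b)) < t)
    (hhi : ¬ nneg b → t < lowerReal c / lowerReal (absS b)) :
    isPos (c + ofReal t * b) := by
  cases b with
  | zero => exact (hb rfl).elim
  | elem s β =>
    have he : lowerReal (absS (elem s β)) = Real.exp β := rfl
    rw [he] at hlo hhi
    have hβ := Real.exp_pos β
    have hc : lowerReal c = lowerReal c / Real.exp β * Real.exp β :=
      (div_mul_cancel₀ _ hβ.ne').symm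
    rw [isPos_add_iff, hc]
    cases s with
    | pos =>
      rw [lowerReal_mul_elem_pos, lowerReal_ofReal]
      nlinarith [hlo id]
    | neg =>
      rw [lowerReal_mul_elem_neg (isSigned_ofReal t), lowerReal_ofReal]
      nlinarith [hhi id]
    | bal =>
      rw [lowerReal_mul_elem_bal (isSigned_ofReal t), lowerReal_ofReal]
      nlinarith [abs_lt.2 ⟨hlo id, hhi id⟩]

theorem exists_isSigned_forall_isPos_add_mul {J : Type} [Finite J] (c b : J → STrop)
    (hzero : ∀ j, b j = 0 → isPos (c j))
    (hpair : ∀ l u, ¬ npos (b l) → ¬ nneg (b u) →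
      isPos (c l * absS (b u) + c u * absS (b l))) :
    ∃ z, isSigned z ∧ ∀ j, isPos (c j + z * b j) := by
  set a : J → ℝ := fun j => lowerReal (c j) / lowerReal (absS (b j))
  have hsep : ∀ l u, ¬ npos (b l) → ¬ nneg (b u) → -a l < a u := by
    intro l u hl hu
    have hel := lowerReal_absS_pos fun h : b l = 0 => hl (by rw [h]; trivial)
    have heu := lowerReal_absS_pos fun h : b u = 0 => hu (by rw [h]; trivial)
    have h := (isPos_add_iff _ _).1 (hpair l u hl hu)
    rw [lowerReal_mul_absS, lowerReal_mul_absS] at h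
    show -(lowerReal (c l) / lowerReal (absS (b l))) < lowerReal (c u) / lowerReal (absS (b u))
    rw [neg_lt_iff_pos_add', div_add_div _ _ hel.ne' heu.ne']
    exact div_pos (by linarith) (mul_pos hel heu)
  obtain ⟨t, hlo, hhi⟩ := (Set.finite_range fun l : {j // ¬ npos (b j)} => -a l).exists_between'
    (Set.finite_range fun u : {j // ¬ nneg (b j)} => a u)
    (by rintro _ ⟨l, rfl⟩ _ ⟨u, rfl⟩; exact hsep l u l.2 u.2)
  refine ⟨ofReal t, isSigned_ofReal t, fun j => ?_⟩
  by_cases hb : b j = 0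
  · simpa [hb, ← zero_def] using hzero j hb
  · exact isPos_add_ofReal_mul hb (fun h => hlo _ ⟨⟨j, h⟩, rfl⟩)
      (fun h => hhi _ ⟨⟨j, h⟩, rfl⟩)

section sums

variable {J : Type} [Fintype J]

lemma balZero_dotProduct (v : J → STrop) {w : J → STrop} (hw : ∀ j, balZero (w j)) :
    balZero (v ⬝ᵥ w) :=
  Finset.sum_induction _ balZero (fun _ _ => balZero_add) trivial fun j _ => balZero_mul _ (hw j)

lemma nneg_dotProduct {v w : J → STrop} (hv : ∀ j, nneg (v j)) (hw : ∀ j, nneg (w j)) :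
    nneg (v ⬝ᵥ w) :=
  Finset.sum_induction _ nneg (fun _ _ => nneg_add) trivial fun j _ => nneg_mul (hv j) (hw j)

lemma isPos_dotProduct {v w : J → STrop} (hv : ∀ j, nneg (v j)) (hw : ∀ j, nneg (w j))
    {j₀ : J} (hv₀ : isPos (v j₀)) (hw₀ : isPos (w j₀)) : isPos (v ⬝ᵥ w) := by
  classical
  rw [dotProduct, ← Finset.add_sum_erase _ _ (Finset.mem_univ j₀)]
  exact isPos_add_of_nneg (isPos_mul hv₀ hw₀)
    (Finset.sum_induction _ nneg (fun _ _ => nneg_add) trivial fun j _ => nneg_mul (hv j) (hw j))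

end sums

lemma sumFin_eq_sum : ∀ {n : ℕ} (f : Fin n → STrop), sumFin f = ∑ i, f i
  | 0, _ => rfl
  | _ + 1, f => by rw [Fin.sum_univ_succ, ← sumFin_eq_sum]; rfl

lemma mem_sep_iff {d : ℕ} {J : Type} (A : Fin d → J → STrop) (y : Fin d → STrop) :
    y ∈ sep A ↔ isSignedVec y ∧ ∀ j, isPos ((y ᵥ* A) j) := by
  simp only [sep, Set.mem_ofPred_eq, sumFin_eq_sum]
  rfl

def nnker' {d : ℕ} {J : Type} [Fintype J] (A : Matrix (Fin d) J STrop) : Set (J → STrop) :=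
  {x | (∀ j, nneg (x j)) ∧ x ≠ 0 ∧ ∀ i, balZero ((A *ᵥ x) i)}

lemma nnker'_eq_nnker {d n : ℕ} (A : Fin d → Fin n → STrop) : nnker' A = nnker A := by
  ext x
  simp only [nnker', nnker, mv, sumFin_eq_sum]
  rfl

lemma vecMul_snoc {d : ℕ} {J : Type} (A : Matrix (Fin (d + 1)) J STrop) (y : Fin d → STrop)
    (z : STrop) (j : J) :
    (Fin.snoc y z ᵥ* A) j = (y ᵥ* A.submatrix Fin.castSucc id) j + z * A (Fin.last d) j := by
  simp [vecMul, dotProduct, Fin.sum_univ_castSucc]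

theorem notMem_nnker'_of_mem_sep {d : ℕ} {J : Type} [Fintype J] {A : Matrix (Fin d) J STrop}
    {x : J → STrop} {y : Fin d → STrop} (hy : y ∈ sep A) : x ∉ nnker' A := by
  rintro ⟨hx, hx0, hAx⟩
  obtain ⟨-, hyA⟩ := (mem_sep_iff A y).1 hy
  obtain ⟨j, hj⟩ := Function.ne_iff.1 hx0
  have hpos : isPos ((y ᵥ* A) ⬝ᵥ x) :=
    isPos_dotProduct (fun j => (hyA j).nneg) hx (hyA j) (isPos_of_nneg_of_ne_zero (hx j) hj)
  rw [← dotProduct_mulVec] at hpos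
  exact not_isPos_of_balZero (balZero_dotProduct y hAx) hpos

lemma nneg_single {J : Type} [DecidableEq J] {a : STrop} (ha : nneg a) (i j : J) :
    nneg ((Pi.single i a : J → STrop) j) := by
  rw [Pi.single_apply]
  split_ifs
  exacts [ha, trivial]

def FMIndex {J : Type} (b : J → STrop) : Type :=
  {j // b j = 0} ⊕ ({j // ¬ npos (b j)} × {j // ¬ nneg (b j)})

noncomputable instance {J : Type} [Fintype J] (b : J → STrop) : Fintype (FMIndex b) := by
  classical
  unfold FMIndex
  infer_instance

section FourierMotzkin

variable {J : Type} [DecidableEq J]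

noncomputable def fmColumn (b : J → STrop) : FMIndex b → J → STrop
  | .inl z => Pi.single z.1 1
  | .inr (l, u) => Pi.single l.1 (absS (b u.1)) + Pi.single u.1 (absS (b l.1))

lemma dotProduct_fmColumn_inl [Fintype J] (b v : J → STrop) (z : {j // b j = 0}) :
    v ⬝ᵥ fmColumn b (.inl z) = v z := by
  simp [fmColumn, dotProduct_single]

lemma dotProduct_fmColumn_inr [Fintype J] (b v : J → STrop) (l : {j // ¬ npos (b j)})
    (u : {j // ¬ nneg (b j)}) :
    v ⬝ᵥ fmColumn b (.inr (l, u)) = v l * absS (b u) + v u * absS (b l) := by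
  simp [fmColumn, dotProduct_add, dotProduct_single]

lemma balZero_dotProduct_fmColumn [Fintype J] (b : J → STrop) :
    ∀ m : FMIndex b, balZero (b ⬝ᵥ fmColumn b m)
  | .inl z => by rw [dotProduct_fmColumn_inl, z.2]; trivial
  | .inr (l, u) => by rw [dotProduct_fmColumn_inr]; exact balZero_mul_absS_add l.2 u.2

lemma nneg_fmColumn (b : J → STrop) : ∀ (m : FMIndex b) (j : J), nneg (fmColumn b m j)
  | .inl _, j => nneg_single (show nneg 1 from trivial) _ j
  | .inr _, j => nneg_add (nneg_single (nneg_absS _) _ j) (nneg_single (nneg_absS _) _ j)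

lemma exists_isPos_fmColumn (b : J → STrop) : ∀ m : FMIndex b, ∃ j, isPos (fmColumn b m j)
  | .inl z => ⟨z, by simp only [fmColumn, Pi.single_eq_same]; trivial⟩
  | .inr (l, u) =>
    have hu : b u ≠ 0 := fun h => u.2 (by rw [h]; trivial)
    ⟨l, isPos_add_of_nneg (by simpa [fmColumn] using isPos_absS hu) (nneg_single (nneg_absS _) _ _)⟩

noncomputable def fmMatrix (b : J → STrop) : Matrix J (FMIndex b) STrop :=
  (Matrix.of (fmColumn b))ᵀ

lemma vecMul_fmMatrix [Fintype J] (b v : J → STrop) (m : FMIndex b) :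
    (v ᵥ* fmMatrix b) m = v ⬝ᵥ fmColumn b m := by
  rw [fmMatrix, vecMul_transpose, dotProduct_comm]
  rfl

theorem nnker'_nonempty_of_mul_fmMatrix [Fintype J] {d : ℕ} (A : Matrix (Fin (d + 1)) J STrop)
    (h : (nnker' (A.submatrix Fin.castSucc id * fmMatrix (A (Fin.last d)))).Nonempty) :
    (nnker' A).Nonempty := by
  set b := A (Fin.last d)
  obtain ⟨x, hx, hx0, hBx⟩ := h
  have hnneg : ∀ j, nneg ((fmMatrix b *ᵥ x) j) :=
    fun j => nneg_dotProduct (fun m => nneg_fmColumn b m j) hx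
  refine ⟨fmMatrix b *ᵥ x, hnneg, ?_, fun i => ?_⟩
  · obtain ⟨m, hm⟩ := Function.ne_iff.1 hx0
    obtain ⟨j, hj⟩ := exists_isPos_fmColumn b m
    have hpos : isPos ((fmMatrix b *ᵥ x) j) :=
      isPos_dotProduct (fun m => nneg_fmColumn b m j) hx hj (isPos_of_nneg_of_ne_zero (hx m) hm)
    exact fun h0 => by rw [h0] at hpos; exact hpos
  · induction i using Fin.lastCases with
    | last =>
      change balZero (b ⬝ᵥ (fmMatrix b *ᵥ x))
      rw [dotProduct_mulVec, dotProduct_comm]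
      exact balZero_dotProduct x fun m => by
        rw [vecMul_fmMatrix]; exact balZero_dotProduct_fmColumn b m
    | cast i =>
      change balZero ((A.submatrix Fin.castSucc id *ᵥ (fmMatrix b *ᵥ x)) i)
      rw [mulVec_mulVec]
      exact hBx i

theorem sep_nonempty_of_mul_fmMatrix [Fintype J] {d : ℕ} (A : Matrix (Fin (d + 1)) J STrop)
    (h : (sep (A.submatrix Fin.castSucc id * fmMatrix (A (Fin.last d)))).Nonempty) :
    (sep A).Nonempty := by
  set b := A (Fin.last d)
  obtain ⟨y, hy⟩ := h
  obtain ⟨hys, hyB⟩ := (mem_sep_iff _ y).1 hy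
  set c := y ᵥ* A.submatrix Fin.castSucc id
  have hc : ∀ m, isPos (c ⬝ᵥ fmColumn b m) := fun m => by
    rw [← vecMul_fmMatrix, vecMul_vecMul]; exact hyB m
  obtain ⟨z, hz, hcz⟩ := exists_isSigned_forall_isPos_add_mul c b
    (fun j hj => by simpa [dotProduct_fmColumn_inl] using hc (.inl ⟨j, hj⟩))
    (fun l u hl hu => by simpa [dotProduct_fmColumn_inr] using hc (.inr (⟨l, hl⟩, ⟨u, hu⟩)))
  refine ⟨Fin.snoc y z, (mem_sep_iff A _).2 ⟨fun i => ?_, fun j => ?_⟩⟩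
  · induction i using Fin.lastCases with
    | last => simpa using hz
    | cast i => simpa using hys i
  · rw [vecMul_snoc]
    exact hcz j

end FourierMotzkin

theorem nnker'_nonempty_or_sep_nonempty {d : ℕ} {J : Type} [Fintype J]
    (A : Matrix (Fin d) J STrop) : (nnker' A).Nonempty ∨ (sep A).Nonempty := by
  induction d generalizing J with
  | zero =>
    by_cases hJ : Nonempty J
    · exact .inl ⟨1, fun _ => trivial, fun h => hJ.elim fun j => STrop.noConfusion (congrFun h j),
        fun i => i.elim0⟩
    · exact .inr ⟨fun i => i.elim0, fun i => i.elim0, fun j => (hJ ⟨j⟩).elim⟩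
  | succ d ih =>
    classical
    exact (ih _).imp (nnker'_nonempty_of_mul_fmMatrix A) (sep_nonempty_of_mul_fmMatrix A)

end STrop

theorem tropical_farkas_general (d n : ℕ) (A : Fin d → Fin n → STrop) :
    Xor' (STrop.nnker A).Nonempty (STrop.sep A).Nonempty := by
  rw [← STrop.nnker'_eq_nnker]
  exact (xor_iff_or_and_not_and _ _).2 ⟨STrop.nnker'_nonempty_or_sep_nonempty A,
    fun ⟨⟨x, hx⟩, ⟨_, hy⟩⟩ => STrop.notMem_nnker'_of_mem_sep hy hx⟩

/-- Farkas' lemma for signed tropical numbers: exactly one of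
nnker(A) and sep(A) is nonempty. -/
theorem tropical_farkas (d n : ℕ) (A : Fin d → Fin n → STrop)
    (hA : ∀ i j, STrop.isSigned (A i j)) :
    Xor' (STrop.nnker A).Nonempty (STrop.sep A).Nonempty :=
  tropical_farkas_general d n A
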